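/- Let ψ_n ∈ H¹(Θ) with ‖ψ_n‖_{L²(Θ)} = 1 be such that ψ_n² converges weakly to the Dirac mass δ_θ at a point θ ∈ Θ against continuous test functions, and suppose m_n > 0 with m_n ∫_Θ μ|∇ψ_n|² → 0 where μ is continuous. Then for every continuous r : Θ̄ → ℝ, lim inf_n (∫_Θ r ψ_n² − m_n ∫_Θ μ |∇ψ_n|²) = r(θ). Consequently, if H(m) := sup over unit-L²-norm ψ ∈ H¹(Θ) of (∫_Θ r ψ² − m ∫_Θ μ|∇ψ|²), then lim inf_{m→0} H(m) ≥ sup_{θ∈Θ} r(θ); combined with the trivial upper bound H(m) ≤ max_{Θ̄} r, one gets H(m) → max_{Θ̄} r as m → 0. -/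
import Mathlib


open MeasureTheory Filter

/-- Admissible test functions: a differentiable representative of an `H¹(Θ)` function
with unit `L²(Θ)` norm (with the needed integrability of `ψ²` and `|∇ψ|²`). -/
def AdmissibleH1' (P : ℕ) (Θ : Set (EuclideanSpace ℝ (Fin P)))
    (ψ : EuclideanSpace ℝ (Fin P) → ℝ) : Prop :=
  Differentiable ℝ ψ ∧
  IntegrableOn (fun θ => ψ θ ^ 2) Θ ∧
  IntegrableOn (fun θ => ‖fderiv ℝ ψ θ‖ ^ 2) Θ ∧
  (∫ θ in Θ, ψ θ ^ 2) = 1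

/-- The Rayleigh quotient supremum `H(m)` for the Neumann principal eigenvalue of
`m ∇·(μ∇·) + r` on `Θ`. -/
noncomputable def RayleighSup' (P : ℕ) (Θ : Set (EuclideanSpace ℝ (Fin P)))
    (μ r : EuclideanSpace ℝ (Fin P) → ℝ) (m : ℝ) : ℝ :=
  sSup {y : ℝ | ∃ ψ, AdmissibleH1' P Θ ψ ∧
    y = (∫ θ in Θ, r θ * ψ θ ^ 2) - m * ∫ θ in Θ, μ θ * ‖fderiv ℝ ψ θ‖ ^ 2}

theorem stmt13 (P : ℕ) (Θ : Set (EuclideanSpace ℝ (Fin P)))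
    (hΘo : IsOpen Θ) (hΘb : Bornology.IsBounded Θ)
    (μ r : EuclideanSpace ℝ (Fin P) → ℝ) (η : ℝ) (hη : 0 < η)
    (hμc : ContinuousOn μ (closure Θ)) (hrc : ContinuousOn r (closure Θ))
    (hμη : ∀ θ ∈ closure Θ, η ≤ μ θ) :
    -- (1) concentrating sequences with vanishing weighted Dirichlet energy give `r θ0`
    (∀ θ0 ∈ Θ, ∀ (ψ : ℕ → EuclideanSpace ℝ (Fin P) → ℝ) (m : ℕ → ℝ),
      (∀ n, AdmissibleH1' P Θ (ψ n)) → (∀ n, 0 < m n) →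
      (∀ f : EuclideanSpace ℝ (Fin P) → ℝ, ContinuousOn f (closure Θ) →
        Tendsto (fun n => ∫ θ in Θ, f θ * (ψ n θ) ^ 2) atTop (nhds (f θ0))) →
      Tendsto (fun n => m n * ∫ θ in Θ, μ θ * ‖fderiv ℝ (ψ n) θ‖ ^ 2) atTop (nhds 0) →
      Tendsto (fun n => (∫ θ in Θ, r θ * (ψ n θ) ^ 2) -
          m n * ∫ θ in Θ, μ θ * ‖fderiv ℝ (ψ n) θ‖ ^ 2)
        atTop (nhds (r θ0))) ∧
    -- (2) if such concentrating sequences exist at every point, then H(m) → max r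
    ((∀ θ0 ∈ Θ, ∀ m : ℕ → ℝ, (∀ n, 0 < m n) → Tendsto m atTop (nhds 0) →
      ∃ ψ : ℕ → EuclideanSpace ℝ (Fin P) → ℝ,
        (∀ n, AdmissibleH1' P Θ (ψ n)) ∧
        (∀ f : EuclideanSpace ℝ (Fin P) → ℝ, ContinuousOn f (closure Θ) →
          Tendsto (fun n => ∫ θ in Θ, f θ * (ψ n θ) ^ 2) atTop (nhds (f θ0))) ∧
        Tendsto (fun n => m n * ∫ θ in Θ, μ θ * ‖fderiv ℝ (ψ n) θ‖ ^ 2)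
          atTop (nhds 0)) →
      Tendsto (RayleighSup' P Θ μ r) (nhdsWithin 0 (Set.Ioi 0))
        (nhds (sSup (r '' closure Θ)))) := by
  -- Part (1)
  have part1 : ∀ θ0 ∈ Θ, ∀ (ψ : ℕ → EuclideanSpace ℝ (Fin P) → ℝ) (m : ℕ → ℝ),
      (∀ n, AdmissibleH1' P Θ (ψ n)) → (∀ n, 0 < m n) →
      (∀ f : EuclideanSpace ℝ (Fin P) → ℝ, ContinuousOn f (closure Θ) →
        Tendsto (fun n => ∫ θ in Θ, f θ * (ψ n θ) ^ 2) atTop (nhds (f θ0))) →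
      Tendsto (fun n => m n * ∫ θ in Θ, μ θ * ‖fderiv ℝ (ψ n) θ‖ ^ 2) atTop (nhds 0) →
      Tendsto (fun n => (∫ θ in Θ, r θ * (ψ n θ) ^ 2) -
          m n * ∫ θ in Θ, μ θ * ‖fderiv ℝ (ψ n) θ‖ ^ 2)
        atTop (nhds (r θ0)) := by
    intro θ0 hθ0 ψ m hadm hmpos hconc hen
    have := (hconc r hrc).sub hen
    simpa using this
  refine ⟨part1, ?_⟩
  intro hexists
  rcases Set.eq_empty_or_nonempty Θ with hemp | hne
  · -- empty case: both sides are 0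
    subst hemp
    have hH : ∀ m : ℝ, RayleighSup' P ∅ μ r m = 0 := by
      intro m
      unfold RayleighSup'
      convert Real.sSup_empty using 2
      ext y
      simp only [Set.mem_setOf_eq, Set.mem_empty_iff_false, iff_false]
      rintro ⟨ψ, ⟨-, -, -, h1⟩, -⟩
      simp [Measure.restrict_empty] at h1
    simp only [closure_empty, Set.image_empty, Real.sSup_empty]
    have : RayleighSup' P (∅ : Set (EuclideanSpace ℝ (Fin P))) μ r = fun _ => 0 :=
      funext hH
    rw [this]
    exact tendsto_const_nhds
  -- nonempty case
  have hK : IsCompact (closure Θ) :=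
    Metric.isCompact_of_isClosed_isBounded isClosed_closure hΘb.closure
  have hKne : (closure Θ).Nonempty := hne.closure
  obtain ⟨θb, hθb, hmax⟩ := hK.exists_isMaxOn hKne hrc
  have hbdd : BddAbove (r '' closure Θ) := hK.bddAbove_image hrc
  set M : ℝ := sSup (r '' closure Θ) with hM
  have hMeq : M = r θb := by
    refine le_antisymm (csSup_le (hKne.image r) ?_) (le_csSup hbdd ⟨θb, hθb, rfl⟩)
    rintro _ ⟨x, hx, rfl⟩; exact hmax hx
  obtain ⟨C, hC⟩ := hK.exists_bound_of_continuousOn hrc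
  have hΘm : MeasurableSet Θ := hΘo.measurableSet
  -- key bounds on the Rayleigh set
  have hSle : ∀ mv : ℝ, 0 ≤ mv → ∀ y ∈ {y : ℝ | ∃ ψ, AdmissibleH1' P Θ ψ ∧
      y = (∫ θ in Θ, r θ * ψ θ ^ 2) - mv * ∫ θ in Θ, μ θ * ‖fderiv ℝ ψ θ‖ ^ 2},
      y ≤ M := by
    rintro mv hmv y ⟨ψ, ⟨hdiff, hsq, hgrad, hnorm⟩, rfl⟩
    have hen : 0 ≤ ∫ θ in Θ, μ θ * ‖fderiv ℝ ψ θ‖ ^ 2 := by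
      refine setIntegral_nonneg hΘm fun θ hθ => ?_
      exact mul_nonneg (le_trans hη.le (hμη θ (subset_closure hθ))) (sq_nonneg _)
    have hrint : IntegrableOn (fun θ => r θ * ψ θ ^ 2) Θ := by
      refine Integrable.bdd_mul (c := C) hsq
        ((hrc.mono subset_closure).aestronglyMeasurable hΘm) ?_
      exact (ae_restrict_iff' hΘm).mpr (ae_of_all _ fun θ hθ =>
        hC θ (subset_closure hθ))
    have hle : (∫ θ in Θ, r θ * ψ θ ^ 2) ≤ ∫ θ in Θ, M * ψ θ ^ 2 := by
      refine setIntegral_mono_on hrint (hsq.const_mul M) hΘm fun θ hθ => ?_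
      have : r θ ≤ M := le_csSup hbdd ⟨θ, subset_closure hθ, rfl⟩
      exact mul_le_mul_of_nonneg_right this (sq_nonneg _)
    have : (∫ θ in Θ, M * ψ θ ^ 2) = M := by
      rw [integral_const_mul, hnorm, mul_one]
    nlinarith [mul_nonneg hmv hen]
  -- reduce to sequences
  rw [Filter.tendsto_iff_seq_tendsto]
  intro m hm
  have hm0 : Tendsto m atTop (nhds 0) := hm.mono_right nhdsWithin_le_nhds
  have hpos : ∀ᶠ n in atTop, 0 < m n := hm self_mem_nhdsWithin
  set m' : ℕ → ℝ := fun n => if 0 < m n then m n else 1 with hm'def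
  have hm'pos : ∀ n, 0 < m' n := by
    intro n; simp only [hm'def]; split <;> [assumption; exact one_pos]
  have heq : m' =ᶠ[atTop] m := hpos.mono fun n hn => by simp [hm'def, hn]
  have hm'0 : Tendsto m' atTop (nhds 0) := hm0.congr' heq.symm
  obtain ⟨ψ, hadm, hconc, hen⟩ := by
    have hθ0 : ∃ θ0 ∈ Θ, True := ⟨hne.choose, hne.some_mem, trivial⟩
    exact hexists hne.choose hne.some_mem m' hm'pos hm'0
  -- the Rayleigh set is nonempty for each m' n, and H(m' n) ≤ M
  have hHle : ∀ n, RayleighSup' P Θ μ r (m' n) ≤ M := by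
    intro n
    refine csSup_le ⟨_, ψ n, hadm n, rfl⟩ (hSle (m' n) (hm'pos n).le)
  have hcong : (RayleighSup' P Θ μ r ∘ m) =ᶠ[atTop] (RayleighSup' P Θ μ r ∘ m') := by
    exact heq.symm.mono fun n hn => by simp [Function.comp, hn]
  refine Tendsto.congr' hcong.symm ?_
  rw [Metric.tendsto_atTop]
  intro ε hε
  -- find θ0 ∈ Θ with r θ0 > M - ε/2
  have hcw : ContinuousWithinAt r (closure Θ) θb := hrc θb hθb
  have h1 : ∀ᶠ θ in nhdsWithin θb (closure Θ), M - ε / 2 < r θ := by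
    refine hcw (Ioi_mem_nhds ?_)
    rw [hMeq] at *; linarith
  have hNB : (nhdsWithin θb Θ).NeBot := by
    rw [← mem_closure_iff_nhdsWithin_neBot]
    exact hθb
  have h2 : ∀ᶠ θ in nhdsWithin θb Θ, M - ε / 2 < r θ :=
    h1.filter_mono (nhdsWithin_mono θb subset_closure)
  obtain ⟨θ0, hθ0r, hθ0⟩ := (h2.and self_mem_nhdsWithin).exists
  -- concentrating sequence at θ0
  obtain ⟨φ, hadm', hconc', hen'⟩ := hexists θ0 hθ0 m' hm'pos hm'0
  have hq : Tendsto (fun n => (∫ θ in Θ, r θ * (φ n θ) ^ 2) -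
      m' n * ∫ θ in Θ, μ θ * ‖fderiv ℝ (φ n) θ‖ ^ 2) atTop (nhds (r θ0)) :=
    part1 θ0 hθ0 φ m' hadm' hm'pos hconc' hen'
  have hev : ∀ᶠ n in atTop, M - ε < (∫ θ in Θ, r θ * (φ n θ) ^ 2) -
      m' n * ∫ θ in Θ, μ θ * ‖fderiv ℝ (φ n) θ‖ ^ 2 := by
    refine hq (Ioi_mem_nhds ?_)
    linarith
  obtain ⟨N, hN⟩ := hev.exists_forall_of_atTop
  refine ⟨N, fun n hn => ?_⟩
  have hlb : M - ε < RayleighSup' P Θ μ r (m' n) := by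
    have hmem : ((∫ θ in Θ, r θ * (φ n θ) ^ 2) -
        m' n * ∫ θ in Θ, μ θ * ‖fderiv ℝ (φ n) θ‖ ^ 2) ∈
        {y : ℝ | ∃ ψ, AdmissibleH1' P Θ ψ ∧
          y = (∫ θ in Θ, r θ * ψ θ ^ 2) - (m' n) * ∫ θ in Θ, μ θ * ‖fderiv ℝ ψ θ‖ ^ 2} :=
      ⟨φ n, hadm' n, rfl⟩
    have hba : BddAbove {y : ℝ | ∃ ψ, AdmissibleH1' P Θ ψ ∧
        y = (∫ θ in Θ, r θ * ψ θ ^ 2) - (m' n) * ∫ θ in Θ, μ θ * ‖fderiv ℝ ψ θ‖ ^ 2} :=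
      ⟨M, hSle (m' n) (hm'pos n).le⟩
    exact lt_of_lt_of_le (hN n hn) (le_csSup hba hmem)
  have hub := hHle n
  simp only [Function.comp]
  rw [Real.dist_eq, abs_sub_lt_iff]
  constructor <;> linarith
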